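/- arXiv:1401.7208 — 5 statements merged into one kernel-verified Lean document; each statement's English description precedes it below -/
import Mathlib

section
/- Let Δ = ⋂_{i=1}^d {x ∈ ℝⁿ : ⟨x, v_i⟩ ≤ λ_i} be a compact polytope of dimension n, and for t > 0 set Δᵗ = ⋂_{i=1}^d {x : ⟨x, v_i⟩ ≤ λ_i − t}. Suppose t₁ > 0 is the smallest t with dim Δ^{t} < n, and suppose Δ^{t₁} is nonempty. Then there exists an index i ∈ {1,...,d} such that Δ^{t₁} is entirely contained in the hyperplane {x : ⟨x, v_i⟩ = λ_i − t₁}. -/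
/-!
If no facet hyperplane contained `Δ^{t₁}`, then for every `i` some point of `Δ^{t₁}` would satisfy
the `i`-th inequality strictly, and the centroid of these points would satisfy all of them
strictly. The strict solution set is open and lies in `Δ^{t₁}`, so `Δ^{t₁}` would have full
dimension.
-/

open Matrix

theorem exists_forall_lt_of_forall_exists_lt {𝕜 E ι : Type*} [Field 𝕜] [LinearOrder 𝕜]
    [IsStrictOrderedRing 𝕜] [AddCommGroup E] [Module 𝕜 E] [Fintype ι]
    (f : ι → E →ₗ[𝕜] 𝕜) (c : ι → 𝕜) (h : ∀ i, ∃ p, (∀ j, f j p ≤ c j) ∧ f i p < c i) :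
    ∃ y, ∀ i, f i y < c i := by
  choose p hp_le hp_lt using h
  refine ⟨(Fintype.card ι : 𝕜)⁻¹ • ∑ j, p j, fun i => ?_⟩
  have hcard : (0 : 𝕜) < Fintype.card ι := Nat.cast_pos.2 (Fintype.card_pos_iff.2 ⟨i⟩)
  have hsum : ∑ j, f i (p j) < Fintype.card ι * c i :=
    calc ∑ j, f i (p j) < ∑ _j : ι, c i :=
          Finset.sum_lt_sum (fun j _ => hp_le j i) ⟨i, Finset.mem_univ i, hp_lt i⟩
      _ = Fintype.card ι * c i := by simp
  rwa [map_smul, map_sum, smul_eq_mul, inv_mul_lt_iff₀ hcard]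

theorem affineSpan_setOf_forall_le_eq_top {E ι : Type*} [NormedAddCommGroup E]
    [NormedSpace ℝ E] [Fintype ι] (f : ι → E →L[ℝ] ℝ) (c : ι → ℝ)
    (h : ∀ i, ∃ p, (∀ j, f j p ≤ c j) ∧ f i p < c i) :
    affineSpan ℝ {x | ∀ i, f i x ≤ c i} = ⊤ := by
  obtain ⟨y, hy⟩ := exists_forall_lt_of_forall_exists_lt (fun i => (f i : E →ₗ[ℝ] ℝ)) c h
  have hopen : IsOpen {x | ∀ i, f i x < c i} := by
    simpa only [Set.ofPred_forall] using
      isOpen_iInter_of_finite fun i => isOpen_lt (f i).continuous continuous_const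
  refine top_unique ?_
  rw [← hopen.affineSpan_eq_top ⟨y, hy⟩]
  exact affineSpan_mono ℝ fun x hx i => (hx i).le

theorem stmt1_general (n d : ℕ) (v : Fin d → Fin n → ℝ) (lam : Fin d → ℝ) (t₁ : ℝ)
    (Δ : ℝ → Set (Fin n → ℝ))
    (hΔ : ∀ t, Δ t = {x | ∀ i, x ⬝ᵥ v i ≤ lam i - t})
    (hdrop : Module.finrank ℝ (affineSpan ℝ (Δ t₁)).direction < n) :
    ∃ i, ∀ x ∈ Δ t₁, x ⬝ᵥ v i = lam i - t₁ := by
  by_contra! hcon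
  let f : Fin d → (Fin n → ℝ) →L[ℝ] ℝ := fun i =>
    LinearMap.toContinuousLinearMap ((dotProductBilin ℝ ℝ).flip (v i))
  have hΔf : Δ t₁ = {x | ∀ i, f i x ≤ lam i - t₁} := hΔ t₁
  have hstrict : ∀ i, ∃ p, (∀ j, f j p ≤ lam j - t₁) ∧ f i p < lam i - t₁ := by
    intro i
    obtain ⟨p, hp, hpi⟩ := hcon i
    rw [hΔf] at hp
    exact ⟨p, hp, (hp i).lt_of_ne hpi⟩
  rw [hΔf, affineSpan_setOf_forall_le_eq_top f _ hstrict, AffineSubspace.direction_top,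
    finrank_top, Module.finrank_fin_fun] at hdrop
  exact hdrop.false

/-- If `t₁ > 0` is the first time at which the dimension of the simultaneously shrunk
polytope `Δᵗ = {x | ∀ i, ⟨x, vᵢ⟩ ≤ λᵢ - t}` drops below `n`, and `Δ^{t₁}` is nonempty,
then some hyperplane `{x | ⟨x, vᵢ⟩ = λᵢ - t₁}` contains all of `Δ^{t₁}`. -/
theorem stmt1 (n d : ℕ) (v : Fin d → Fin n → ℝ) (lam : Fin d → ℝ) (t₁ : ℝ)
    (Δ : ℝ → Set (Fin n → ℝ))
    (hΔ : ∀ t, Δ t = {x | ∀ i, x ⬝ᵥ v i ≤ lam i - t})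
    (hv : ∀ i, v i ≠ 0)
    (hcompact : IsCompact (Δ 0))
    (hfull : Module.finrank ℝ (affineSpan ℝ (Δ 0)).direction = n)
    (ht₁ : 0 < t₁)
    (hbefore : ∀ t, 0 < t → t < t₁ →
      Module.finrank ℝ (affineSpan ℝ (Δ t)).direction = n)
    (hdrop : Module.finrank ℝ (affineSpan ℝ (Δ t₁)).direction < n)
    (hne : (Δ t₁).Nonempty) :
    ∃ i, ∀ x ∈ Δ t₁, x ⬝ᵥ v i = lam i - t₁ :=
  stmt1_general n d v lam t₁ Δ hΔ hdrop
end

section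
/- Let Δ = ⋂_{i=1}^d {x ∈ ℝⁿ : ⟨x, v_i⟩ ≤ λ_i} be a compact polytope centered at the origin with shrinking-procedure data: dimension-drop times t₁ < ... < t_{M+1}, index sets D_j = {i : λ_i = t_j}, remaining indices grouped as I_k = {i : λ_i = λ_{j_k}} with t_{M+1} < λ_{j_1} < ... < λ_{j_N}, and orthogonal projections π_j^⊥ : ℝⁿ → ℝ^{k₁+...+k_j}. Suppose M = 0. Then Δ = ⋂_{k=0}^N Δ̃ⁿ_k, where Δ̃ⁿ_0 = ⋂_{i ∈ D₁∪...∪D_{M+1}} {x : ⟨x, v_i⟩ ≤ t_{M+1}} and Δ̃ⁿ_k = ⋂_{i ∈ D₁∪...∪D_{M+1}∪I_k} {x : ⟨x, v_i⟩ ≤ λ_{j_k}} for k ≥ 1; each Δ̃ⁿ_k is a compact monotone polytope of dimension n. -/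
/-!
Every constraint of `Δ` has constant `T` or some `μ k > T`, which gives the decomposition.
Each `Δ̃ⁿ_k` contains the open neighbourhood `{x | ⟨x, vᵢ⟩ < c}` of the origin, so it is
full-dimensional. For compactness, the hypothesis that the facets `D₁` cut out the cone `{0}` makes
`g x = ∑_{i ∈ D₁} max ⟨x, vᵢ⟩ 0` positive on the unit sphere, hence `≥ ε` there and, by positive
homogeneity, `g x ≥ ε ‖x‖`; on a polytope whose constraints include those of `D₁`, `g` is bounded
above.
-/

open Matrix

theorem setOf_forall_le_eq_inter_iInter {α ι κ : Type*} (g : ι → α → ℝ) (lam : ι → ℝ) (T : ℝ)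
    (μ : κ → ℝ) (hTμ : ∀ k, T ≤ μ k) (hpart : ∀ i, lam i = T ∨ ∃ k, lam i = μ k) :
    {x | ∀ i, g i x ≤ lam i} =
      {x | ∀ i, lam i = T → g i x ≤ T} ∩
        ⋂ k, {x | ∀ i, (lam i = T ∨ lam i = μ k) → g i x ≤ μ k} := by
  ext x
  simp only [Set.mem_ofPred_eq, Set.mem_inter_iff, Set.mem_iInter]
  constructor
  · intro hx
    refine ⟨fun i hi => hi ▸ hx i, fun k i hi => ?_⟩
    rcases hi with hi | hi
    · exact (hi ▸ hx i).trans (hTμ k)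
    · exact hi ▸ hx i
  · rintro ⟨hT, hμ⟩ i
    rcases hpart i with hi | ⟨k, hi⟩
    · exact hi ▸ hT i hi
    · exact hi ▸ hμ k i (Or.inr hi)

section Polytope

variable {ι E : Type*} [NormedAddCommGroup E] [NormedSpace ℝ E] (f : ι → E →L[ℝ] ℝ)
  (P : ι → Prop)

theorem isClosed_setOf_forall_le (c : ℝ) : IsClosed {x | ∀ i, P i → f i x ≤ c} := by
  simp only [Set.ofPred_forall]
  exact isClosed_iInter fun i =>
    isClosed_iInter fun _ => isClosed_le (f i).continuous continuous_const

theorem affineSpan_setOf_forall_le_eq_top_s7 [Finite ι] {c : ℝ} (hc : 0 < c) :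
    affineSpan ℝ {x | ∀ i, P i → f i x ≤ c} = ⊤ := by
  have hopen : IsOpen {x | ∀ i, f i x < c} := by
    simp only [Set.ofPred_forall]
    exact isOpen_iInter_of_finite fun i => isOpen_lt (f i).continuous continuous_const
  have hzero : (0 : E) ∈ {x | ∀ i, f i x < c} := fun i => by simpa using hc
  refine top_unique ((hopen.affineSpan_eq_top ⟨0, hzero⟩).ge.trans (affineSpan_mono ℝ ?_))
  exact fun x hx i _ => (hx i).le

theorem exists_pos_mul_norm_le_sum_max [Fintype ι] [DecidablePred P] [ProperSpace E]
    (hcone : {x | ∀ i, P i → f i x ≤ 0} = {0}) :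
    ∃ ε > 0, ∀ x, ε * ‖x‖ ≤ ∑ i with P i, max (f i x) 0 := by
  set g : E → ℝ := fun x => ∑ i with P i, max (f i x) 0 with hg
  have hg_smul : ∀ t : ℝ, 0 ≤ t → ∀ x, g (t • x) = t * g x := by
    intro t ht x
    simp only [hg, map_smul, smul_eq_mul, Finset.mul_sum, mul_max_of_nonneg _ _ ht, mul_zero]
  have hg_pos : ∀ u ∈ Metric.sphere (0 : E) 1, 0 < g u := by
    intro u hu
    have hu0 : ¬ ∀ i, P i → f i u ≤ 0 := fun h =>
      ne_zero_of_mem_unit_sphere ⟨u, hu⟩ ((Set.ext_iff.1 hcone u).1 h)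
    push Not at hu0
    obtain ⟨i, hi, hpos⟩ := hu0
    exact Finset.sum_pos' (fun _ _ => le_max_right _ _)
      ⟨i, Finset.mem_filter.2 ⟨Finset.mem_univ i, hi⟩, lt_max_of_lt_left hpos⟩
  obtain ⟨ε, hε, hεg⟩ := (isCompact_sphere (0 : E) 1).exists_forall_le' (by fun_prop) hg_pos
  refine ⟨ε, hε, fun x => ?_⟩
  rcases eq_or_ne x 0 with rfl | hx
  · simp
  have hnorm : 0 < ‖x‖ := norm_pos_iff.2 hx
  have hεx := hεg (‖x‖⁻¹ • x) (by simp [norm_smul, hnorm.ne'])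
  rw [hg_smul _ (inv_nonneg.2 hnorm.le)] at hεx
  calc ε * ‖x‖ ≤ ‖x‖⁻¹ * g x * ‖x‖ := mul_le_mul_of_nonneg_right hεx hnorm.le
    _ = g x := by field_simp

theorem isBounded_setOf_forall_le [Fintype ι] [ProperSpace E]
    (hcone : {x | ∀ i, P i → f i x ≤ 0} = {0}) (c : ℝ) :
    Bornology.IsBounded {x | ∀ i, P i → f i x ≤ c} := by
  classical
  obtain ⟨ε, hε, hεx⟩ := exists_pos_mul_norm_le_sum_max f P hcone
  refine (Metric.isBounded_closedBall (x := 0) (r := (∑ i with P i, max c 0) / ε)).subset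
    fun x hx => ?_
  rw [mem_closedBall_zero_iff, le_div_iff₀ hε, mul_comm]
  refine (hεx x).trans (Finset.sum_le_sum fun i hi => ?_)
  exact max_le_max (hx i (Finset.mem_filter.1 hi).2) le_rfl

theorem isCompact_setOf_forall_le [Fintype ι] [ProperSpace E]
    (hcone : {x | ∀ i, P i → f i x ≤ 0} = {0}) {Q : ι → Prop} (hPQ : ∀ i, P i → Q i)
    (c : ℝ) : IsCompact {x | ∀ i, Q i → f i x ≤ c} :=
  Metric.isCompact_of_isClosed_isBounded (isClosed_setOf_forall_le f Q c)
    ((isBounded_setOf_forall_le f P hcone c).subset fun _ hx i hi => hx i (hPQ i hi))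

end Polytope

/-- Here `D₁ = {i | λᵢ = T}` and `I_k = {i | λᵢ = μ k}`; centeredness is encoded by the
polytope shrunk to time `T` being `{0}`. -/
theorem stmt7_general (n d N : ℕ) (v : Fin d → Fin n → ℝ) (lam : Fin d → ℝ)
    (T : ℝ) (hT : 0 < T)
    (μ : Fin N → ℝ) (hTμ : ∀ k, T < μ k)
    (hpart : ∀ i, lam i = T ∨ ∃ k, lam i = μ k)
    (hcentered : {x : Fin n → ℝ | ∀ i, lam i = T → x ⬝ᵥ v i ≤ 0} = {0}) :
    ({x : Fin n → ℝ | ∀ i, x ⬝ᵥ v i ≤ lam i} =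
        {x | ∀ i, lam i = T → x ⬝ᵥ v i ≤ T} ∩
          ⋂ k : Fin N, {x | ∀ i, (lam i = T ∨ lam i = μ k) → x ⬝ᵥ v i ≤ μ k}) ∧
      IsCompact {x : Fin n → ℝ | ∀ i, lam i = T → x ⬝ᵥ v i ≤ T} ∧
      (∀ k : Fin N,
        IsCompact {x : Fin n → ℝ | ∀ i, (lam i = T ∨ lam i = μ k) → x ⬝ᵥ v i ≤ μ k}) ∧
      affineSpan ℝ {x : Fin n → ℝ | ∀ i, lam i = T → x ⬝ᵥ v i ≤ T} = ⊤ ∧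
      (∀ k : Fin N,
        affineSpan ℝ {x : Fin n → ℝ | ∀ i, (lam i = T ∨ lam i = μ k) → x ⬝ᵥ v i ≤ μ k}
          = ⊤) := by
  let f : Fin d → (Fin n → ℝ) →L[ℝ] ℝ :=
    fun i => LinearMap.toContinuousLinearMap ((dotProductBilin ℝ ℝ).flip (v i))
  exact ⟨setOf_forall_le_eq_inter_iInter (fun i x => x ⬝ᵥ v i) lam T μ (fun k => (hTμ k).le)
      hpart,
    isCompact_setOf_forall_le f _ hcentered (fun _ => id) T,
    fun k => isCompact_setOf_forall_le f _ hcentered (fun _ => Or.inl) (μ k),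
    affineSpan_setOf_forall_le_eq_top_s7 f _ hT,
    fun k => affineSpan_setOf_forall_le_eq_top_s7 f _ (hT.trans (hTμ k))⟩

/-- Theorem 1, case `M = 0`: a centered polytope `Δ` with one dimension drop (at time `T`,
`D₁ = D_{M+1} = {i | λᵢ = T}`) and remaining constraint values `T < μ₁ < … < μ_N`
(`I_k = {i | λᵢ = μ_k}`) is the intersection `⋂_{k=0}^N Δ̃ⁿ_k` of the monotone polytopes
`Δ̃ⁿ_0 = {x | ⟨x, vᵢ⟩ ≤ T, i ∈ D₁}` and `Δ̃ⁿ_k = {x | ⟨x, vᵢ⟩ ≤ μ_k, i ∈ D₁ ∪ I_k}`,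
each of which is compact and full-dimensional. Centeredness is encoded by the shrunk
polytope at time `T` being `{0}`. -/
theorem stmt7 (n d N : ℕ) (v : Fin d → Fin n → ℝ) (lam : Fin d → ℝ)
    (T : ℝ) (hT : 0 < T)
    (μ : Fin N → ℝ) (hμ : StrictMono μ) (hTμ : ∀ k, T < μ k)
    (hpart : ∀ i, lam i = T ∨ ∃ k, lam i = μ k)
    (hΔcompact : IsCompact {x : Fin n → ℝ | ∀ i, x ⬝ᵥ v i ≤ lam i})
    (hcentered : {x : Fin n → ℝ | ∀ i, lam i = T → x ⬝ᵥ v i ≤ 0} = {0}) :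
    ({x : Fin n → ℝ | ∀ i, x ⬝ᵥ v i ≤ lam i} =
        {x | ∀ i, lam i = T → x ⬝ᵥ v i ≤ T} ∩
          ⋂ k : Fin N, {x | ∀ i, (lam i = T ∨ lam i = μ k) → x ⬝ᵥ v i ≤ μ k}) ∧
      IsCompact {x : Fin n → ℝ | ∀ i, lam i = T → x ⬝ᵥ v i ≤ T} ∧
      (∀ k : Fin N,
        IsCompact {x : Fin n → ℝ | ∀ i, (lam i = T ∨ lam i = μ k) → x ⬝ᵥ v i ≤ μ k}) ∧
      affineSpan ℝ {x : Fin n → ℝ | ∀ i, lam i = T → x ⬝ᵥ v i ≤ T} = ⊤ ∧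
      (∀ k : Fin N,
        affineSpan ℝ {x : Fin n → ℝ | ∀ i, (lam i = T ∨ lam i = μ k) → x ⬝ᵥ v i ≤ μ k}
          = ⊤) :=
  stmt7_general n d N v lam T hT μ hTμ hpart hcentered
end

section
/- With the notation of Theorem 1 (shrinking procedure data for a centered polytope Δ with M ≥ 1 dimension drops before the final one): Δ = ⋂_{k=0}^N Δ̃ⁿ_k ∩ ⋂_{j=1}^M (Δ̃^{k₁+...+k_j} × ℝ^{n−(k₁+...+k_j)}), where Δ̃^{k₁+...+k_j} = ⋂_{i ∈ D₁∪...∪D_j} {y ∈ ℝ^{k₁+...+k_j} : ⟨y, π_j^⊥(v_i)⟩ ≤ t_j} and Δ̃ⁿ_0, Δ̃ⁿ_k are defined as in the M = 0 case. -/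
/-!
Every constraint cutting out one of the pieces is a constraint `⟨x, vᵢ⟩ ≤ λᵢ` of `Δ` with the
bound relaxed to some `t_j ≥ λᵢ` or `μ_k ≥ λᵢ`; conversely each constraint of `Δ` occurs in a
piece with its own bound `λᵢ`. Truncating `x` to its first `s j` coordinates is harmless because
the normals of the facets frozen by time `t_j` vanish on the remaining ones.
-/

lemma sum_ite_lt_mul_eq_dotProduct {R : Type*} [NonUnitalNonAssocSemiring R] {n : ℕ}
    (x w : Fin n → R) (m : ℕ) (hw : ∀ l : Fin n, m ≤ (l : ℕ) → w l = 0) :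
    ∑ l : Fin n, (if (l : ℕ) < m then x l else 0) * w l = x ⬝ᵥ w := by
  refine Finset.sum_congr rfl fun l _ => ?_
  by_cases hl : (l : ℕ) < m
  · rw [if_pos hl]
  · rw [if_neg hl, hw l (not_lt.mp hl), zero_mul, mul_zero]

theorem stmt8_general (n d M N : ℕ)
    (v : Fin d → Fin n → ℝ) (lam : Fin d → ℝ)
    (t : Fin (M + 1) → ℝ) (ht : StrictMono t)
    (μ : Fin N → ℝ) (htμ : ∀ k, t (Fin.last M) < μ k)
    (hpart : ∀ i, (∃ j, lam i = t j) ∨ ∃ k, lam i = μ k)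
    (s : Fin (M + 1) → ℕ)
    (hv : ∀ (j : Fin (M + 1)) (i : Fin d), (∃ j' ≤ j, lam i = t j') →
      ∀ l : Fin n, s j ≤ (l : ℕ) → v i l = 0) :
    {x : Fin n → ℝ | ∀ i, x ⬝ᵥ v i ≤ lam i} =
      (⋂ k : Fin N,
        {x : Fin n → ℝ | ∀ i, ((∃ j, lam i = t j) ∨ lam i = μ k) → x ⬝ᵥ v i ≤ μ k}) ∩
      (⋂ j : Fin (M + 1),
        {x : Fin n → ℝ | ∀ i, (∃ j' ≤ j, lam i = t j') →
          (∑ l : Fin n, (if (l : ℕ) < s j then x l else 0) * v i l) ≤ t j}) := by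
  have truncate (x : Fin n → ℝ) (j : Fin (M + 1)) (i : Fin d) (hi : ∃ j' ≤ j, lam i = t j') :
      ∑ l : Fin n, (if (l : ℕ) < s j then x l else 0) * v i l = x ⬝ᵥ v i :=
    sum_ite_lt_mul_eq_dotProduct x (v i) (s j) (hv j i hi)
  ext x
  simp only [Set.mem_ofPred_eq, Set.mem_inter_iff, Set.mem_iInter]
  constructor
  · intro hx
    refine ⟨fun k i hi => ?_, fun j i hi => ?_⟩
    · rcases hi with ⟨j, hj⟩ | hk
      · calc x ⬝ᵥ v i ≤ t j := hj ▸ hx i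
          _ ≤ t (Fin.last M) := ht.monotone (Fin.le_last j)
          _ ≤ μ k := (htμ k).le
      · exact hk ▸ hx i
    · obtain ⟨j', hj', hj'i⟩ := hi
      rw [truncate x j i ⟨j', hj', hj'i⟩]
      exact (hx i).trans (hj'i ▸ ht.monotone hj')
  · rintro ⟨hμk, htj⟩ i
    rcases hpart i with ⟨j, hj⟩ | ⟨k, hk⟩
    · have hi : ∃ j' ≤ j, lam i = t j' := ⟨j, le_rfl, hj⟩
      simpa only [truncate x j i hi, ← hj] using htj j i hi
    · exact hk ▸ hμk k i (Or.inr hk)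

/-- Theorem 1, case `M ≥ 1`: with dimension-drop times `t₁ < … < t_{M+1}`,
`D_j = {i | λᵢ = t_j}`, partial-dimension sums `s j = k₁ + … + k_{j+1}` (so
`s (last) = n`), normals of frozen facets lying in `ℝ^{s j} × {0}`, and remaining
constraint values `μ_k > t_{M+1}`, the polytope `Δ` equals the intersection of the
monotone polytopes `Δ̃ⁿ_k` (`k = 0, …, N`, the index `j = last` below giving `Δ̃ⁿ_0`)
with the cylinders `Δ̃^{k₁+…+k_j} × ℝ^{n-(k₁+…+k_j)}` (`j = 1, …, M`), where the `j`-th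
cylinder is cut out by the projected normals `π_j^⊥(vᵢ)`, `i ∈ D₁ ∪ … ∪ D_j`, with
constant `t_j`. -/
theorem stmt8 (n d M N : ℕ) (hM : 1 ≤ M)
    (v : Fin d → Fin n → ℝ) (lam : Fin d → ℝ)
    (t : Fin (M + 1) → ℝ) (ht : StrictMono t) (ht0 : 0 < t 0)
    (μ : Fin N → ℝ) (hμ : StrictMono μ) (htμ : ∀ k, t (Fin.last M) < μ k)
    (hpart : ∀ i, (∃ j, lam i = t j) ∨ ∃ k, lam i = μ k)
    (s : Fin (M + 1) → ℕ) (hs : StrictMono s) (hs0 : 0 < s 0)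
    (hslast : s (Fin.last M) = n)
    (hv : ∀ (j : Fin (M + 1)) (i : Fin d), (∃ j' ≤ j, lam i = t j') →
      ∀ l : Fin n, s j ≤ (l : ℕ) → v i l = 0) :
    {x : Fin n → ℝ | ∀ i, x ⬝ᵥ v i ≤ lam i} =
      (⋂ k : Fin N,
        {x : Fin n → ℝ | ∀ i, ((∃ j, lam i = t j) ∨ lam i = μ k) → x ⬝ᵥ v i ≤ μ k}) ∩
      (⋂ j : Fin (M + 1),
        {x : Fin n → ℝ | ∀ i, (∃ j' ≤ j, lam i = t j') →
          (∑ l : Fin n, (if (l : ℕ) < s j then x l else 0) * v i l) ≤ t j}) :=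
  stmt8_general n d M N v lam t ht μ htμ hpart s hv
end

section
/- For every ε > 0 there is a symplectic embedding of the open ball B^{2n} of capacity 2π(a − ε) into Diamond^n(a) × (0, 2π)^n ⊂ ℝⁿ(x) × ℝⁿ(y) with the standard symplectic form Σ dx_j ∧ dy_j, where Diamond^n(a) = {x ∈ ℝⁿ : Σ_{j=1}^n |x_j| < a/2}. -/
open Matrix

/-- The standard symplectic form `Σ dxⱼ ∧ dyⱼ` on `ℝⁿ(x) × ℝⁿ(y)`, as a bilinear pairing. -/
noncomputable def stdSymplForm (n : ℕ)
    (p q : (Fin n → ℝ) × (Fin n → ℝ)) : ℝ :=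
  p.1 ⬝ᵥ q.2 - p.2 ⬝ᵥ q.1

/-- The open ball `B^{2n}_c ⊂ ℂⁿ ≅ ℝⁿ(x) × ℝⁿ(y)` of capacity `c`. -/
def capacityBall (n : ℕ) (c : ℝ) : Set ((Fin n → ℝ) × (Fin n → ℝ)) :=
  {p | Real.pi * ∑ j, ((p.1 j) ^ 2 + (p.2 j) ^ 2) < c}

/-- The open diamond `◇ⁿ(a) = {x ∈ ℝⁿ | Σ |xⱼ| < a/2}`. -/
def diamond (n : ℕ) (a : ℝ) : Set (Fin n → ℝ) := {x | ∑ j, |x j| < a / 2}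

noncomputable section
namespace LMS41
open Real

variable (s M : ℝ)

def qf (u : ℝ) : ℝ := Real.sqrt (u^2 + s^2)
def Lf (u : ℝ) : ℝ := Real.log (u + qf s u) - Real.log s
def Nf (u : ℝ) : ℝ := u * qf s u + s^2 * Lf s u
def gam (x : ℝ) : ℝ := x + (s*M/2) * Real.arctan (x/s)
def gamp (x : ℝ) : ℝ := 1 + s^2*M/(2*(s^2+x^2))
def gamd (x : ℝ) : ℝ := -(s^2*M*x)/(s^2+x^2)^2

variable {s M} (hs : 0 < s) (hM : 0 ≤ M)
include hs

lemma qf_pos (u : ℝ) : 0 < qf s u := Real.sqrt_pos.2 (by positivity)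

lemma qf_sq (u : ℝ) : (qf s u)^2 = u^2 + s^2 := Real.sq_sqrt (by positivity)

lemma abs_lt_qf (u : ℝ) : |u| < qf s u := by
  have h := qf_sq hs u
  nlinarith [qf_pos hs u, abs_nonneg u, sq_abs u, hs]

lemma s_le_qf (u : ℝ) : s ≤ qf s u := by
  have h := qf_sq hs u
  nlinarith [qf_pos hs u, hs]

lemma add_qf_pos (u : ℝ) : 0 < u + qf s u := by
  have := abs_lt_qf hs u
  cases abs_cases u with
  | inl h => nlinarith [qf_pos hs u]
  | inr h => nlinarith

lemma hasDerivAt_qf (u : ℝ) : HasDerivAt (qf s) (u / qf s u) u := by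
  have h1 : HasDerivAt (fun u : ℝ => u^2 + s^2) (2*u) u := by
    simpa using ((hasDerivAt_pow 2 u).add_const (s^2))
  have h2 := (Real.hasDerivAt_sqrt (x := u^2 + s^2) (by positivity)).comp u h1
  refine HasDerivAt.congr_deriv h2 ?_
  rw [show Real.sqrt (u^2+s^2) = qf s u from rfl]
  field_simp [ne_of_gt (qf_pos hs u)]

lemma hasDerivAt_Lf (u : ℝ) : HasDerivAt (Lf s) (1 / qf s u) u := by
  have h1 : HasDerivAt (fun u => u + qf s u) (1 + u / qf s u) u :=
    (hasDerivAt_id u).add (hasDerivAt_qf hs u)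
  have h2 := (Real.hasDerivAt_log (ne_of_gt (add_qf_pos hs u))).comp u h1
  have h3 : HasDerivAt (Lf s) ((u + qf s u)⁻¹ * (1 + u / qf s u)) u := by
    exact h2.sub_const (Real.log s)
  convert h3 using 1
  have hq := qf_pos hs u
  have hS := add_qf_pos hs u
  field_simp
  nlinarith [qf_sq hs u]

lemma hasDerivAt_Nf (u : ℝ) : HasDerivAt (Nf s) (2 * qf s u) u := by
  have h1 : HasDerivAt (fun u => u * qf s u) (1 * qf s u + u * (u / qf s u)) u :=
    (hasDerivAt_id u).mul (hasDerivAt_qf hs u)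
  have h2 : HasDerivAt (Nf s) (1 * qf s u + u * (u / qf s u) + s^2 * (1 / qf s u)) u :=
    h1.add ((hasDerivAt_Lf hs u).const_mul (s^2))
  convert h2 using 1
  have hq := qf_pos hs u
  field_simp
  nlinarith [qf_sq hs u]

include hM in
lemma gamp_ge_one (x : ℝ) : 1 ≤ gamp s M x := by
  have : 0 ≤ s^2*M/(2*(s^2+x^2)) := by positivity
  simp only [gamp]; linarith

include hM in
lemma gamp_pos (x : ℝ) : 0 < gamp s M x := lt_of_lt_of_le one_pos (gamp_ge_one hs hM x)

lemma hasDerivAt_gam (x : ℝ) : HasDerivAt (gam s M) (gamp s M x) x := by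
  have h1 : HasDerivAt (fun x : ℝ => x/s) (1/s) x := (hasDerivAt_id x).div_const s
  have h2 := (Real.hasDerivAt_arctan (x/s)).comp x h1
  have h3 : HasDerivAt (gam s M) (1 + (s*M/2) * (1 / (1 + (x/s)^2) * (1/s))) x :=
    (hasDerivAt_id x).add (h2.const_mul (s*M/2))
  convert h3 using 1
  have : (0:ℝ) < s^2 + x^2 := by positivity
  simp only [gamp]
  field_simp

lemma hasDerivAt_gamp (x : ℝ) : HasDerivAt (gamp s M) (gamd s M x) x := by
  have h0 : (0:ℝ) < s^2 + x^2 := by positivity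
  have h1 : HasDerivAt (fun x : ℝ => 2*(s^2+x^2)) (2*(2*x)) x := by
    simpa using (((hasDerivAt_pow 2 x).const_add (s^2)).const_mul 2)
  have h2 : HasDerivAt (fun x : ℝ => s^2*M/(2*(s^2+x^2)))
      (-(s^2*M) * (2*(2*x)) / (2*(s^2+x^2))^2) x := by
    have h4 := (hasDerivAt_const x (s^2*M)).div h1 (by positivity)
    exact h4.congr_deriv (by ring)
  have h3 := h2.const_add 1
  refine HasDerivAt.congr_deriv h3 ?_
  simp only [gamd]
  field_simp



/-! ### fderiv machinery on ℝ×ℝ -/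

def pd (P Q : ℝ) : ℝ×ℝ →L[ℝ] ℝ :=
  P • (ContinuousLinearMap.fst ℝ ℝ ℝ) + Q • (ContinuousLinearMap.snd ℝ ℝ ℝ)

omit hs in
@[simp] lemma pd_apply (P Q : ℝ) (w : ℝ×ℝ) : pd P Q w = P * w.1 + Q * w.2 := by
  simp [pd, smul_eq_mul]

omit hs in
lemma pd_eq {L : ℝ×ℝ →L[ℝ] ℝ} {P Q : ℝ} (h : ∀ a b : ℝ, L (a,b) = P*a + Q*b) :
    L = pd P Q := by
  apply ContinuousLinearMap.ext
  rintro ⟨a,b⟩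
  rw [pd_apply, h]

variable (s M)

def Uf (z : ℝ×ℝ) : ℝ := gam s M z.1
def Wf (z : ℝ×ℝ) : ℝ := gamp s M z.1
def Vf (z : ℝ×ℝ) : ℝ := z.2 * (gamp s M z.1)⁻¹
def cVf (z : ℝ×ℝ) : ℝ := z.2 * (-(gamd s M z.1) * ((gamp s M z.1)^2)⁻¹)
def Xfun (z : ℝ×ℝ) : ℝ :=
  ((Uf s M z)^2 + (Vf s M z)^2 + s^2) * Nf s (Uf s M z) * (4*((Uf s M z)^2 + s^2))⁻¹
def Yfun (z : ℝ×ℝ) : ℝ :=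
  Real.pi + 2 * Real.arctan ((Vf s M z) * (qf s (Uf s M z))⁻¹)
def ee (z : ℝ×ℝ) : ℝ×ℝ := (Xfun s M z, Yfun s M z)

/-- partial derivatives of `Xfun` -/
def PX (z : ℝ×ℝ) : ℝ :=
  (((Uf s M z)^2 + (Vf s M z)^2 + s^2) * Nf s (Uf s M z)) *
      (-(8*(Uf s M z)*(Wf s M z)) * ((4*((Uf s M z)^2+s^2))^2)⁻¹)
    + (4*((Uf s M z)^2+s^2))⁻¹ *
      (Nf s (Uf s M z) * (2*(Uf s M z)*(Wf s M z) + 2*(Vf s M z)*(cVf s M z))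
        + ((Uf s M z)^2 + (Vf s M z)^2 + s^2) * (2*(qf s (Uf s M z))*(Wf s M z)))
def QX (z : ℝ×ℝ) : ℝ :=
  (4*((Uf s M z)^2+s^2))⁻¹ * (Nf s (Uf s M z) * (2*(Vf s M z)*(Wf s M z)⁻¹))
def PY (z : ℝ×ℝ) : ℝ :=
  2 * ((1 + ((Vf s M z)*(qf s (Uf s M z))⁻¹)^2)⁻¹ *
    ((Vf s M z) * (-((Wf s M z)*(Uf s M z)/(qf s (Uf s M z))) * ((qf s (Uf s M z))^2)⁻¹)
      + (qf s (Uf s M z))⁻¹ * (cVf s M z)))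
def QY (z : ℝ×ℝ) : ℝ :=
  2 * ((1 + ((Vf s M z)*(qf s (Uf s M z))⁻¹)^2)⁻¹ * ((qf s (Uf s M z))⁻¹ * (Wf s M z)⁻¹))

variable {s M}

lemma hasFDerivAt_Uf (z : ℝ×ℝ) : HasFDerivAt (Uf s M) (pd (gamp s M z.1) 0) z := by
  have h := (hasDerivAt_gam hs (M := M) (x := z.1)).comp_hasFDerivAt z (hasFDerivAt_fst (𝕜 := ℝ) (p := z))
  refine h.congr_fderiv (pd_eq fun a b => ?_)
  simp [smul_eq_mul]

include hM

lemma hasFDerivAt_Winv (z : ℝ×ℝ) :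
    HasFDerivAt (fun z : ℝ×ℝ => (gamp s M z.1)⁻¹)
      (pd (-(gamd s M z.1) * ((gamp s M z.1)^2)⁻¹) 0) z := by
  have hne : gamp s M z.1 ≠ 0 := ne_of_gt (gamp_pos hs hM z.1)
  have h1 : HasDerivAt (fun x => (gamp s M x)⁻¹) (-(gamd s M z.1)/(gamp s M z.1)^2) z.1 :=
    (hasDerivAt_gamp hs (M := M) (x := z.1)).inv hne
  have h := h1.comp_hasFDerivAt z (hasFDerivAt_fst (𝕜 := ℝ) (p := z))
  refine h.congr_fderiv (pd_eq fun a b => ?_)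
  simp [smul_eq_mul]
  ring

lemma hasFDerivAt_Vf (z : ℝ×ℝ) :
    HasFDerivAt (Vf s M) (pd (cVf s M z) ((gamp s M z.1)⁻¹)) z := by
  have h2 := hasFDerivAt_Winv hs hM z
  have h1 : HasFDerivAt (fun z : ℝ×ℝ => z.2) (ContinuousLinearMap.snd ℝ ℝ ℝ) z :=
    hasFDerivAt_snd
  have h := h1.mul h2
  refine h.congr_fderiv (pd_eq fun a b => ?_)
  simp [cVf, smul_eq_mul]
  ring

lemma hasFDerivAt_qU (z : ℝ×ℝ) :
    HasFDerivAt (fun z : ℝ×ℝ => qf s (Uf s M z))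
      (pd ((Uf s M z) / qf s (Uf s M z) * gamp s M z.1) 0) z := by
  have h := (hasDerivAt_qf hs (Uf s M z)).comp_hasFDerivAt z (hasFDerivAt_Uf hs z)
  refine h.congr_fderiv (pd_eq fun a b => ?_)
  simp [smul_eq_mul]
  ring

lemma hasFDerivAt_NU (z : ℝ×ℝ) :
    HasFDerivAt (fun z : ℝ×ℝ => Nf s (Uf s M z))
      (pd (2 * qf s (Uf s M z) * gamp s M z.1) 0) z := by
  have h := (hasDerivAt_Nf hs (Uf s M z)).comp_hasFDerivAt z (hasFDerivAt_Uf hs z)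
  refine h.congr_fderiv (pd_eq fun a b => ?_)
  simp [smul_eq_mul]
  ring

lemma hasFDerivAt_R2 (z : ℝ×ℝ) :
    HasFDerivAt (fun z : ℝ×ℝ => (Uf s M z)^2 + (Vf s M z)^2 + s^2)
      (pd (2*(Uf s M z)*(Wf s M z) + 2*(Vf s M z)*(cVf s M z))
          (2*(Vf s M z)*(Wf s M z)⁻¹)) z := by
  have hU := hasFDerivAt_Uf hs (M := M) z
  have hV := hasFDerivAt_Vf hs hM z
  have h : HasFDerivAt (fun z : ℝ×ℝ => Uf s M z * Uf s M z + Vf s M z * Vf s M z + s^2)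
      (((Uf s M z • pd (gamp s M z.1) 0 + Uf s M z • pd (gamp s M z.1) 0) +
        (Vf s M z • pd (cVf s M z) ((gamp s M z.1)⁻¹) +
         Vf s M z • pd (cVf s M z) ((gamp s M z.1)⁻¹)))) z :=
    ((hU.mul hU).add (hV.mul hV)).add_const (s^2)
  have h2 := h.congr_of_eventuallyEq
    (Filter.Eventually.of_forall (fun w : ℝ×ℝ => by ring :
      ∀ w : ℝ×ℝ, (fun z : ℝ×ℝ => (Uf s M z)^2 + (Vf s M z)^2 + s^2) w =
        (fun z : ℝ×ℝ => Uf s M z * Uf s M z + Vf s M z * Vf s M z + s^2) w))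
  refine h2.congr_fderiv (pd_eq fun a b => ?_)
  simp [smul_eq_mul, Wf]
  ring

lemma hasFDerivAt_Dinv (z : ℝ×ℝ) :
    HasFDerivAt (fun z : ℝ×ℝ => (4*((Uf s M z)^2 + s^2))⁻¹)
      (pd (-(8*(Uf s M z)*(Wf s M z)) * ((4*((Uf s M z)^2+s^2))^2)⁻¹) 0) z := by
  have hU := hasFDerivAt_Uf hs (M := M) z
  have hpos : (0:ℝ) < 4*((Uf s M z)^2 + s^2) := by positivity
  have hin : HasFDerivAt (fun z : ℝ×ℝ => 4*((Uf s M z)^2 + s^2))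
      (pd (8*(Uf s M z)*(Wf s M z)) 0) z := by
    have h : HasFDerivAt (fun z : ℝ×ℝ => 4*(Uf s M z * Uf s M z + s^2))
        ((4:ℝ) • (Uf s M z • pd (gamp s M z.1) 0 + Uf s M z • pd (gamp s M z.1) 0)) z :=
      ((hU.mul hU).add_const (s^2)).const_mul (4:ℝ)
    have h2 := h.congr_of_eventuallyEq
      (Filter.Eventually.of_forall (fun w : ℝ×ℝ => by ring :
        ∀ w : ℝ×ℝ, (fun z : ℝ×ℝ => 4*((Uf s M z)^2 + s^2)) w =
          (fun z : ℝ×ℝ => 4*(Uf s M z * Uf s M z + s^2)) w))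
    refine h2.congr_fderiv (pd_eq fun a b => ?_)
    simp [smul_eq_mul, Wf]
    ring
  have h := (hasDerivAt_inv (ne_of_gt hpos)).comp_hasFDerivAt z hin
  refine h.congr_fderiv (pd_eq fun a b => ?_)
  simp [smul_eq_mul]
  ring

lemma hasFDerivAt_Xfun (z : ℝ×ℝ) :
    HasFDerivAt (Xfun s M) (pd (PX s M z) (QX s M z)) z := by
  have hR2 := hasFDerivAt_R2 hs hM z
  have hN := hasFDerivAt_NU hs hM z
  have hD := hasFDerivAt_Dinv hs hM z
  have h := (hR2.mul hN).mul hD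
  refine h.congr_fderiv (pd_eq fun a b => ?_)
  simp [PX, QX, smul_eq_mul, Wf]
  ring

lemma hasFDerivAt_Yfun (z : ℝ×ℝ) :
    HasFDerivAt (Yfun s M) (pd (PY s M z) (QY s M z)) z := by
  have hV := hasFDerivAt_Vf hs hM z
  have hq := hasFDerivAt_qU hs hM z
  have hqpos := qf_pos hs (Uf s M z)
  have hqinv : HasFDerivAt (fun z : ℝ×ℝ => (qf s (Uf s M z))⁻¹)
      (pd (-((Wf s M z)*(Uf s M z)/(qf s (Uf s M z))) * ((qf s (Uf s M z))^2)⁻¹) 0) z := by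
    have h := (hasDerivAt_inv (ne_of_gt hqpos)).comp_hasFDerivAt z hq
    refine h.congr_fderiv (pd_eq fun a b => ?_)
    simp [smul_eq_mul, Wf]
    ring
  have harg := hV.mul hqinv
  have h := ((Real.hasDerivAt_arctan ((Vf s M z) * (qf s (Uf s M z))⁻¹)).comp_hasFDerivAt
      z harg).const_mul (2:ℝ)
  have h2 := h.const_add Real.pi
  refine h2.congr_fderiv (pd_eq fun a b => ?_)
  simp [PY, QY, smul_eq_mul, Wf]
  ring



omit hM

/-! ### determinant identity -/

omit hs in
lemma det_alg (u v w q N c s : ℝ) (hq : 0 < q) (hw : w ≠ 0) (h2 : q^2 = u^2+s^2) :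
    ((((u^2+v^2+s^2) * N) * (-(8*u*w) * ((4*(u^2+s^2))^2)⁻¹)
      + (4*(u^2+s^2))⁻¹ * (N * (2*u*w + 2*v*c) + (u^2+v^2+s^2) * (2*q*w)))) *
      (2 * ((1 + (v*q⁻¹)^2)⁻¹ * (q⁻¹ * w⁻¹)))
    - ((4*(u^2+s^2))⁻¹ * (N * (2*v*w⁻¹))) *
      (2 * ((1 + (v*q⁻¹)^2)⁻¹ * (v * (-(w*u/q) * (q^2)⁻¹) + q⁻¹ * c))) = 1 := by
  have hs2 : s^2 = q^2 - u^2 := by linarith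
  have hqne : q ≠ 0 := ne_of_gt hq
  have hden : 1 + (v*q⁻¹)^2 ≠ 0 := by positivity
  have hq2v : q^2 + v^2 ≠ 0 := by positivity
  rw [hs2]
  have h4 : (4:ℝ)*(u^2+(q^2-u^2)) = 4*q^2 := by ring
  rw [h4]
  field_simp
  ring

include hM in
lemma det_ee (z : ℝ×ℝ) :
    PX s M z * QY s M z - QX s M z * PY s M z = 1 := by
  have hq := qf_pos hs (Uf s M z)
  have hw : Wf s M z ≠ 0 := ne_of_gt (gamp_pos hs hM z.1)
  have h2 := qf_sq hs (Uf s M z)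
  have h := det_alg (Uf s M z) (Vf s M z) (Wf s M z) (qf s (Uf s M z)) (Nf s (Uf s M z))
    (cVf s M z) s hq hw h2
  simpa [PX, QX, PY, QY, Wf] using h

/-! ### smoothness -/

lemma contDiff_qf : ContDiff ℝ (⊤ : ℕ∞) (qf s) := by
  rw [contDiff_iff_contDiffAt]
  intro u
  have h1 : ContDiff ℝ (⊤ : ℕ∞) (fun u : ℝ => u^2 + s^2) := by
    exact (contDiff_id.pow 2).add contDiff_const
  exact (Real.contDiffAt_sqrt (by positivity)).comp u h1.contDiffAt

lemma contDiff_Lf : ContDiff ℝ (⊤ : ℕ∞) (Lf s) := by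
  rw [contDiff_iff_contDiffAt]
  intro u
  have h1 : ContDiff ℝ (⊤ : ℕ∞) (fun u : ℝ => u + qf s u) := contDiff_id.add (contDiff_qf hs)
  have h2 : ContDiffAt ℝ (⊤ : ℕ∞) Real.log (u + qf s u) :=
    Real.contDiffAt_log.2 (ne_of_gt (add_qf_pos hs u))
  exact (h2.comp u h1.contDiffAt).sub contDiffAt_const

lemma contDiff_Nf : ContDiff ℝ (⊤ : ℕ∞) (Nf s) :=
  (contDiff_id.mul (contDiff_qf hs)).add (contDiff_const.mul (contDiff_Lf hs))

omit hs in
lemma contDiff_gam : ContDiff ℝ (⊤ : ℕ∞) (gam s M) := by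
  have h1 : ContDiff ℝ (⊤ : ℕ∞) (fun x : ℝ => x/s) := contDiff_id.div_const s
  exact contDiff_id.add (contDiff_const.mul (Real.contDiff_arctan.comp h1))

lemma contDiff_gamp : ContDiff ℝ (⊤ : ℕ∞) (gamp s M) := by
  refine contDiff_const.add (contDiff_const.div ?_ ?_)
  · exact contDiff_const.mul (contDiff_const.add (contDiff_id.pow 2))
  · intro x
    positivity

lemma contDiff_Uf : ContDiff ℝ (⊤ : ℕ∞) (Uf s M) := (contDiff_gam (s := s) (M := M)).comp contDiff_fst

include hM in
lemma contDiff_Vf : ContDiff ℝ (⊤ : ℕ∞) (Vf s M) := by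
  refine contDiff_snd.mul (((contDiff_gamp hs (M := M)).comp contDiff_fst).inv ?_)
  intro z
  exact ne_of_gt (gamp_pos hs hM z.1)

include hM in
lemma contDiff_Xfun : ContDiff ℝ (⊤ : ℕ∞) (Xfun s M) := by
  have hU := contDiff_Uf (hs := hs) (M := M)
  have hV := contDiff_Vf hs hM
  have h1 : ContDiff ℝ (⊤ : ℕ∞) (fun z : ℝ×ℝ => (Uf s M z)^2 + (Vf s M z)^2 + s^2) :=
    ((hU.pow 2).add (hV.pow 2)).add contDiff_const
  have h2 : ContDiff ℝ (⊤ : ℕ∞) (fun z : ℝ×ℝ => Nf s (Uf s M z)) := (contDiff_Nf hs).comp hU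
  have h3 : ContDiff ℝ (⊤ : ℕ∞) (fun z : ℝ×ℝ => (4*((Uf s M z)^2 + s^2))⁻¹) := by
    refine (contDiff_const.mul ((hU.pow 2).add contDiff_const)).inv ?_
    intro z
    have := qf_sq hs (Uf s M z)
    positivity
  exact (h1.mul h2).mul h3

include hM in
lemma contDiff_Yfun : ContDiff ℝ (⊤ : ℕ∞) (Yfun s M) := by
  have hU := contDiff_Uf (hs := hs) (M := M)
  have hV := contDiff_Vf hs hM
  have hq : ContDiff ℝ (⊤ : ℕ∞) (fun z : ℝ×ℝ => (qf s (Uf s M z))⁻¹) := by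
    refine ((contDiff_qf hs).comp hU).inv ?_
    intro z
    exact ne_of_gt (qf_pos hs _)
  exact contDiff_const.add (contDiff_const.mul (Real.contDiff_arctan.comp (hV.mul hq)))

/-! ### injectivity -/

lemma strictMono_Nf : StrictMono (Nf s) := by
  have hdiff : ∀ u : ℝ, HasDerivAt (Nf s) (2 * qf s u) u := hasDerivAt_Nf hs
  refine strictMono_of_deriv_pos (fun u => ?_)
  rw [(hdiff u).deriv]
  have := qf_pos hs u
  positivity

include hM in
lemma strictMono_gam : StrictMono (gam s M) := by
  refine strictMono_of_deriv_pos (fun x => ?_)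
  rw [(hasDerivAt_gam hs (M := M) (x := x)).deriv]
  exact gamp_pos hs hM x

include hM in
lemma ee_inj : Function.Injective (ee s M) := by
  rintro z z' h
  have h1 : Xfun s M z = Xfun s M z' := congrArg Prod.fst h
  have h2 : Yfun s M z = Yfun s M z' := congrArg Prod.snd h
  have harctan : Real.arctan ((Vf s M z) * (qf s (Uf s M z))⁻¹)
      = Real.arctan ((Vf s M z') * (qf s (Uf s M z'))⁻¹) := by
    have := h2
    simp only [Yfun] at this
    linarith
  have hm : (Vf s M z) * (qf s (Uf s M z))⁻¹ = (Vf s M z') * (qf s (Uf s M z'))⁻¹ :=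
    Real.arctan_injective harctan
  set m := (Vf s M z) * (qf s (Uf s M z))⁻¹ with hmdef
  have hv : Vf s M z = m * qf s (Uf s M z) := by
    rw [hmdef, mul_assoc, inv_mul_cancel₀ (ne_of_gt (qf_pos hs (Uf s M z))), mul_one]
  have hv' : Vf s M z' = m * qf s (Uf s M z') := by
    rw [hm, mul_assoc, inv_mul_cancel₀ (ne_of_gt (qf_pos hs (Uf s M z'))), mul_one]
  have hX : ∀ w : ℝ×ℝ, Vf s M w = m * qf s (Uf s M w) →
      Xfun s M w = (1 + m^2) * Nf s (Uf s M w) / 4 := by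
    intro w hw
    have hq2 := qf_sq hs (Uf s M w)
    have hqpos := qf_pos hs (Uf s M w)
    rw [Xfun, hw]
    have h5 : (Uf s M w)^2 + (m * qf s (Uf s M w))^2 + s^2
        = (1 + m^2) * (qf s (Uf s M w))^2 := by linear_combination (-1 : ℝ) * hq2
    rw [h5, show (4:ℝ)*((Uf s M w)^2 + s^2) = 4*(qf s (Uf s M w))^2 by rw [hq2]]
    have hqne : qf s (Uf s M w) ≠ 0 := ne_of_gt hqpos
    field_simp
  rw [hX z hv, hX z' hv'] at h1
  have hN : Nf s (Uf s M z) = Nf s (Uf s M z') := by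
    have h1m : (0:ℝ) < 1 + m^2 := by positivity
    field_simp at h1
    exact h1
  have hU : Uf s M z = Uf s M z' := (strictMono_Nf hs).injective hN
  have hx : z.1 = z'.1 := (strictMono_gam hs hM).injective hU
  have hVeq : Vf s M z = Vf s M z' := by rw [hv, hv', hU]
  have hy : z.2 = z'.2 := by
    have hw : gamp s M z.1 ≠ 0 := ne_of_gt (gamp_pos hs hM z.1)
    have := hVeq
    simp only [Vf, hx] at this ⊢
    have hw' : gamp s M z'.1 ≠ 0 := ne_of_gt (gamp_pos hs hM z'.1)
    field_simp at this
    exact this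
  exact Prod.ext hx hy

/-! ### range of Yfun -/

omit hs in
lemma Yfun_mem (z : ℝ×ℝ) : Yfun s M z ∈ Set.Ioo (0:ℝ) (2*Real.pi) := by
  have h1 := Real.arctan_lt_pi_div_two ((Vf s M z) * (qf s (Uf s M z))⁻¹)
  have h2 := Real.neg_pi_div_two_lt_arctan ((Vf s M z) * (qf s (Uf s M z))⁻¹)
  constructor <;> (simp only [Yfun]; linarith)



/-! ### quantitative bounds -/

omit hs in
lemma sqrt_one_add_le (z : ℝ) (hz : 0 ≤ z) : Real.sqrt (1+z) ≤ 1 + Real.sqrt z := by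
  nlinarith [Real.sq_sqrt (by linarith : (0:ℝ) ≤ 1+z), Real.sq_sqrt hz,
    Real.sqrt_nonneg (1+z), Real.sqrt_nonneg z]

omit hs in
lemma log_le_two_sqrt (z : ℝ) (hz : 0 ≤ z) : Real.log (1+z) ≤ 2*Real.sqrt z := by
  have h1 : Real.log (1+z) = 2 * Real.log (Real.sqrt (1+z)) := by
    rw [Real.log_sqrt (by linarith)]; ring
  have h2 : Real.log (Real.sqrt (1+z)) ≤ Real.sqrt (1+z) - 1 :=
    Real.log_le_sub_one_of_pos (Real.sqrt_pos.2 (by linarith))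
  have h3 := sqrt_one_add_le z hz
  linarith

lemma Lf_nonneg (u : ℝ) (hu : 0 ≤ u) : 0 ≤ Lf s u := by
  have h : s ≤ u + qf s u := by linarith [s_le_qf hs u]
  have h2 : Real.log s ≤ Real.log (u + qf s u) := Real.log_le_log hs h
  simp only [Lf]
  linarith

lemma Lf_le (u R : ℝ) (hu0 : 0 ≤ u) (huR : u ≤ 2*R) : Lf s u ≤ 4*Real.sqrt (R/s) := by
  have hq := qf_pos hs u
  have hqle : qf s u ≤ u + s := by nlinarith [qf_sq hs u, hq, hs]
  have h1 : Lf s u ≤ Real.log (1 + 2*u/s) := by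
    have hle : u + qf s u ≤ s * (1 + 2*u/s) := by
      rw [mul_add, mul_one, mul_div_cancel₀ _ (ne_of_gt hs)]
      linarith
    have h2 : Real.log (u + qf s u) ≤ Real.log (s * (1 + 2*u/s)) :=
      Real.log_le_log (add_qf_pos hs u) hle
    have h3 : Real.log (s * (1 + 2*u/s)) = Real.log s + Real.log (1 + 2*u/s) :=
      Real.log_mul (ne_of_gt hs) (by positivity)
    simp only [Lf]
    linarith
  have h2 : Real.log (1 + 2*u/s) ≤ 2*Real.sqrt (2*u/s) := log_le_two_sqrt _ (by positivity)
  have h3 : Real.sqrt (2*u/s) ≤ Real.sqrt (4*(R/s)) := by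
    apply Real.sqrt_le_sqrt
    rw [div_le_iff₀ hs] at *
    calc 2*u ≤ 4*R := by linarith
    _ = 4*(R/s)*s := by field_simp
  have h4 : Real.sqrt (4*(R/s)) = 2*Real.sqrt (R/s) := by
    rw [show (4:ℝ)*(R/s) = 2^2*(R/s) by norm_num, Real.sqrt_mul (by positivity),
      Real.sqrt_sq (by norm_num : (0:ℝ) ≤ 2)]
  linarith

lemma Lf_odd (u : ℝ) : Lf s (-u) = - Lf s u := by
  have hqe : qf s (-u) = qf s u := by simp only [qf, neg_sq]
  have hprod : (-u + qf s u) * (u + qf s u) = s^2 := by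
    have := qf_sq hs u
    nlinarith
  have hne1 : (-u + qf s u) ≠ 0 := by
    have := add_qf_pos hs (-u); rw [hqe] at this; exact ne_of_gt this
  have hne2 : (u + qf s u) ≠ 0 := ne_of_gt (add_qf_pos hs u)
  have h1 : Real.log (-u + qf s u) + Real.log (u + qf s u) = Real.log (s^2) := by
    rw [← Real.log_mul hne1 hne2, hprod]
  have h2 : Real.log (s^2) = 2 * Real.log s := by
    rw [Real.log_pow]; push_cast; ring
  simp only [Lf, hqe]
  linarith

lemma abs_Lf_le (u R : ℝ) (huR : |u| ≤ 2*R) : |Lf s u| ≤ 4*Real.sqrt (R/s) := by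
  rcases le_total 0 u with hu | hu
  · rw [abs_of_nonneg (Lf_nonneg hs u hu)]
    exact Lf_le hs u R hu (by rwa [abs_of_nonneg hu] at huR)
  · have h1 : Lf s u = - Lf s (-u) := by rw [Lf_odd hs]; ring
    rw [h1, abs_neg, abs_of_nonneg (Lf_nonneg hs (-u) (by linarith))]
    exact Lf_le hs (-u) R (by linarith) (by rwa [abs_of_nonpos hu] at huR)

include hM in
lemma abs_gam_ge (x : ℝ) : |x| ≤ |gam s M x| := by
  rcases le_total 0 x with hx | hx
  · have h1 : 0 ≤ Real.arctan (x/s) := by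
      rw [← Real.arctan_zero]
      exact Real.arctan_strictMono.monotone (by positivity)
    have h3 : 0 ≤ (s*M/2) * Real.arctan (x/s) := mul_nonneg (by positivity) h1
    have h2 : x ≤ gam s M x := by
      simp only [gam]; linarith
    rw [abs_of_nonneg hx, abs_of_nonneg (by linarith)]
    exact h2
  · have h1 : Real.arctan (x/s) ≤ 0 := by
      rw [← Real.arctan_zero]
      exact Real.arctan_strictMono.monotone
        (div_nonpos_of_nonpos_of_nonneg hx hs.le)
    have h3 : (s*M/2) * Real.arctan (x/s) ≤ 0 :=
      mul_nonpos_of_nonneg_of_nonpos (by positivity) h1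
    have h2 : gam s M x ≤ x := by
      simp only [gam]; linarith
    rw [abs_of_nonpos hx, abs_of_nonpos (by linarith)]
    linarith

include hM in
lemma abs_gam_le (x : ℝ) : |gam s M x| ≤ |x| + s*M := by
  have hpi := Real.pi_le_four
  have harc1 := Real.arctan_lt_pi_div_two (x/s)
  have harc2 := Real.neg_pi_div_two_lt_arctan (x/s)
  have hsM : 0 ≤ s*M := by positivity
  have h : |(s*M/2) * Real.arctan (x/s)| ≤ s*M := by
    rw [abs_mul]
    have h1 : |Real.arctan (x/s)| ≤ 2 := by
      rw [abs_le]; constructor <;> nlinarith [Real.pi_pos]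
    have h2 : |s*M/2| = s*M/2 := abs_of_nonneg (by positivity)
    nlinarith
  calc |gam s M x| ≤ |x| + |(s*M/2) * Real.arctan (x/s)| := abs_add_le x _
  _ ≤ |x| + s*M := by linarith


omit hs in
set_option maxHeartbeats 1600000 in
lemma core_alg (R x y u w v q N s M EE : ℝ)
    (hs : 0 < s) (hM : 0 ≤ M) (hR : 0 < R) (hxR : |x| ≤ R)
    (hq2 : q^2 = u^2+s^2) (hqpos : 0 < q)
    (hw : w = 1 + s^2*M/(2*(s^2+x^2))) (hv : v = y*w⁻¹)
    (habs_u_ge : |x| ≤ |u|) (habs_u_le : |u| ≤ |x| + s*M)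
    (hNabs : |N| ≤ |u| * q + s^2*M)
    (hEE : EE = 2*R*(s*M) + (s*M)^2 + 2*s^2*M + s^2) :
    (u^2+v^2+s^2) * |N| / (u^2+s^2) ≤ x^2 + y^2 + EE := by
  have hsM0 : 0 ≤ s*M := by positivity
  have hKpos : (0:ℝ) < u^2+s^2 := by positivity
  have h0 : (0:ℝ) < s^2+x^2 := by positivity
  have hwpos : 0 < w := by
    rw [hw]; positivity
  have huq : |u| * q ≤ u^2+s^2 := by
    have h1 : |u| ≤ q := by nlinarith [abs_nonneg u, sq_abs u]
    nlinarith [mul_le_mul_of_nonneg_right h1 hqpos.le]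
  have hx2u2 : x^2 ≤ u^2 := by
    have h := pow_le_pow_left₀ (abs_nonneg x) habs_u_ge 2
    rwa [sq_abs, sq_abs] at h
  have hu2 : u^2 ≤ x^2 + 2*R*(s*M) + (s*M)^2 := by
    have h := pow_le_pow_left₀ (abs_nonneg u) habs_u_le 2
    rw [sq_abs] at h
    have h2 : (|x| + s*M)^2 ≤ x^2 + 2*R*(s*M) + (s*M)^2 := by
      have h3 : |x| * (s*M) ≤ R*(s*M) := mul_le_mul_of_nonneg_right hxR hsM0
      nlinarith [sq_abs x]
    linarith
  have hvw : v^2*w^2 = y^2 := by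
    rw [hv]
    field_simp
  have hw2K : u^2+s^2+s^2*M ≤ w^2*(u^2+s^2) := by
    have hdK : s^2*M*(s^2+x^2) ≤ s^2*M*(s^2+u^2) := by
      nlinarith [mul_le_mul_of_nonneg_left hx2u2 (mul_nonneg (sq_nonneg s) hM)]
    have hexp : w^2*(u^2+s^2) - (u^2+s^2) - 2*(s^2*M/(2*(s^2+x^2)))*(u^2+s^2) =
        (s^2*M/(2*(s^2+x^2)))^2*(u^2+s^2) := by
      rw [hw]; ring
    have heq2 : 2*(s^2*M/(2*(s^2+x^2)))*(u^2+s^2) = s^2*M*(s^2+u^2)/(s^2+x^2) := by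
      field_simp
      ring
    have hfrac : s^2*M ≤ 2*(s^2*M/(2*(s^2+x^2)))*(u^2+s^2) := by
      rw [heq2, le_div_iff₀ h0]
      linarith
    have hnn : 0 ≤ (s^2*M/(2*(s^2+x^2)))^2*(u^2+s^2) := by positivity
    linarith
  have hf2 : v^2*(u^2+s^2+s^2*M) ≤ y^2*(u^2+s^2) := by
    calc v^2*(u^2+s^2+s^2*M) ≤ v^2*(w^2*(u^2+s^2)) :=
          mul_le_mul_of_nonneg_left hw2K (sq_nonneg v)
      _ = y^2*(u^2+s^2) := by rw [← hvw]; ring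
  have hmain : (u^2+v^2+s^2) * (|u| * q + s^2*M) ≤
      (u^2+s^2) * (x^2 + y^2 + EE) := by
    have hsMK : s^2*(s^2*M) ≤ s^2*M*(u^2+s^2) := by
      linarith [mul_le_mul_of_nonneg_left
        (show s^2 ≤ u^2+s^2 by nlinarith [sq_nonneg u])
        (mul_nonneg (sq_nonneg s) hM)]
    have t1 : u^2*(|u| * q+s^2*M) ≤ u^2*(u^2+s^2) + s^2*M*(u^2+s^2) := by
      have h1 := mul_le_mul_of_nonneg_left huq (sq_nonneg u)
      have h2 : u^2*(s^2*M) ≤ s^2*M*(u^2+s^2) := by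
        linarith [mul_le_mul_of_nonneg_left
          (show u^2 ≤ u^2+s^2 by nlinarith [sq_nonneg s])
          (mul_nonneg (sq_nonneg s) hM)]
      linarith
    have t2 : v^2*(|u| * q+s^2*M) ≤ y^2*(u^2+s^2) := by
      have h1 : |u| * q + s^2*M ≤ (u^2+s^2) + s^2*M := by linarith
      have h2 := mul_le_mul_of_nonneg_left h1 (sq_nonneg v)
      calc v^2*(|u| * q+s^2*M) ≤ v^2*((u^2+s^2) + s^2*M) := h2
        _ = v^2*(u^2+s^2+s^2*M) := by ring
        _ ≤ y^2*(u^2+s^2) := hf2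
    have t3 : s^2*(|u| * q+s^2*M) ≤ s^2*(u^2+s^2) + s^2*M*(u^2+s^2) := by
      have h1 := mul_le_mul_of_nonneg_left huq (sq_nonneg s)
      linarith
    have hsum : (u^2+v^2+s^2) * (|u| * q + s^2*M) ≤
        (u^2+s^2)*(u^2 + y^2 + s^2 + 2*(s^2*M)) := by nlinarith [t1, t2, t3]
    have hlast : (u^2+s^2)*(u^2 + y^2 + s^2 + 2*(s^2*M)) ≤
        (u^2+s^2) * (x^2 + y^2 + EE) := by
      apply mul_le_mul_of_nonneg_left _ (le_of_lt hKpos)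
      rw [hEE]
      linarith
    linarith
  rw [div_le_iff₀ hKpos]
  calc (u^2+v^2+s^2) * |N| ≤ (u^2+v^2+s^2) * (|u| * q + s^2*M) :=
        mul_le_mul_of_nonneg_left hNabs (by positivity)
    _ ≤ (u^2+s^2) * (x^2 + y^2 + EE) := hmain
    _ = (x^2 + y^2 + EE) * (u^2+s^2) := by ring

include hM in
lemma core_bound (R x y : ℝ) (hR : 0 < R) (hxR : |x| ≤ R) (hsM : s*M ≤ R)
    (hLf : |Lf s (gam s M x)| ≤ M) :
    4*|Xfun s M (x,y)| ≤ x^2 + y^2 + (2*R*(s*M) + (s*M)^2 + 2*s^2*M + s^2) := by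
  have hq2 := qf_sq hs (gam s M x)
  have hqpos := qf_pos hs (gam s M x)
  have hNabs : |Nf s (gam s M x)| ≤ |gam s M x| * qf s (gam s M x) + s^2*M := by
    have h1 : |Nf s (gam s M x)| ≤ |gam s M x * qf s (gam s M x)| + |s^2 * Lf s (gam s M x)| := by
      simp only [Nf]
      exact abs_add_le _ _
    have h2 : |gam s M x * qf s (gam s M x)| = |gam s M x| * qf s (gam s M x) := by
      rw [abs_mul, abs_of_pos hqpos]
    have h3 : |s^2 * Lf s (gam s M x)| = s^2 * |Lf s (gam s M x)| := by
      rw [abs_mul, abs_of_nonneg (sq_nonneg s)]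
    have h4 : s^2 * |Lf s (gam s M x)| ≤ s^2 * M :=
      mul_le_mul_of_nonneg_left hLf (sq_nonneg s)
    linarith
  have hXeq : 4*|Xfun s M (x,y)| =
      ((gam s M x)^2+(y*(gamp s M x)⁻¹)^2+s^2) * |Nf s (gam s M x)| /
        ((gam s M x)^2+s^2) := by
    have heq : Xfun s M (x,y) = ((gam s M x)^2+(y*(gamp s M x)⁻¹)^2+s^2) *
        Nf s (gam s M x) * (4*((gam s M x)^2+s^2))⁻¹ := rfl
    have hK : (0:ℝ) < (gam s M x)^2+s^2 := by positivity
    rw [heq, abs_mul, abs_mul,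
      abs_of_nonneg (by positivity : (0:ℝ) ≤ (gam s M x)^2+(y*(gamp s M x)⁻¹)^2+s^2),
      abs_of_nonneg (by positivity : (0:ℝ) ≤ (4*((gam s M x)^2+s^2))⁻¹)]
    field_simp
  rw [hXeq]
  exact core_alg R x y (gam s M x) (gamp s M x) (y*(gamp s M x)⁻¹) (qf s (gam s M x))
    (Nf s (gam s M x)) s M _ hs hM hR hxR hq2 hqpos rfl rfl
    (abs_gam_ge hs hM x) (abs_gam_le hs hM x) hNabs rfl



/-! ### the product map on (Fin n → ℝ) × (Fin n → ℝ) -/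

variable (s M) in
def prj (n : ℕ) (j : Fin n) : ((Fin n → ℝ) × (Fin n → ℝ)) →L[ℝ] ℝ×ℝ :=
  ((ContinuousLinearMap.proj j).comp (ContinuousLinearMap.fst ℝ (Fin n → ℝ) (Fin n → ℝ))).prod
  ((ContinuousLinearMap.proj j).comp (ContinuousLinearMap.snd ℝ (Fin n → ℝ) (Fin n → ℝ)))

omit hs in
@[simp] lemma prj_apply (n : ℕ) (j : Fin n) (p : (Fin n → ℝ) × (Fin n → ℝ)) :
    prj n j p = (p.1 j, p.2 j) := rfl

variable (s M) in
def bigF (n : ℕ) (p : (Fin n → ℝ) × (Fin n → ℝ)) : (Fin n → ℝ) × (Fin n → ℝ) :=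
  (fun j => Xfun s M (p.1 j, p.2 j), fun j => Yfun s M (p.1 j, p.2 j))

variable (s M) in
def LL (n : ℕ) (p : (Fin n → ℝ) × (Fin n → ℝ)) :
    ((Fin n → ℝ) × (Fin n → ℝ)) →L[ℝ] ((Fin n → ℝ) × (Fin n → ℝ)) :=
  (ContinuousLinearMap.pi fun j =>
    (pd (PX s M (p.1 j, p.2 j)) (QX s M (p.1 j, p.2 j))).comp (prj n j)).prod
  (ContinuousLinearMap.pi fun j =>
    (pd (PY s M (p.1 j, p.2 j)) (QY s M (p.1 j, p.2 j))).comp (prj n j))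

include hM in
lemma hasFDerivAt_bigF (n : ℕ) (p : (Fin n → ℝ) × (Fin n → ℝ)) :
    HasFDerivAt (bigF s M n) (LL s M n p) p := by
  apply HasFDerivAt.prodMk
  · refine hasFDerivAt_pi.2 (fun j => ?_)
    exact ((hasFDerivAt_Xfun hs hM (p.1 j, p.2 j)).comp p ((prj n j).hasFDerivAt) :)
  · refine hasFDerivAt_pi.2 (fun j => ?_)
    exact ((hasFDerivAt_Yfun hs hM (p.1 j, p.2 j)).comp p ((prj n j).hasFDerivAt) :)

include hM in
lemma contDiff_bigF (n : ℕ) : ContDiff ℝ (⊤ : ℕ∞) (bigF s M n) := by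
  have hcoord : ∀ j : Fin n, ContDiff ℝ (⊤ : ℕ∞) (fun p : (Fin n → ℝ) × (Fin n → ℝ) =>
      (p.1 j, p.2 j)) := fun j => (prj n j).contDiff
  apply ContDiff.prodMk
  · exact contDiff_pi.2 (fun j => (contDiff_Xfun hs hM).comp (hcoord j))
  · exact contDiff_pi.2 (fun j => (contDiff_Yfun hs hM).comp (hcoord j))

include hM in
lemma bigF_inj (n : ℕ) : Function.Injective (bigF s M n) := by
  intro p p' h
  have h1 : ∀ j, ee s M (p.1 j, p.2 j) = ee s M (p'.1 j, p'.2 j) := by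
    intro j
    have hx := congrFun (congrArg Prod.fst h) j
    have hy := congrFun (congrArg Prod.snd h) j
    exact Prod.ext hx hy
  have h2 : ∀ j : Fin n, (p.1 j, p.2 j) = (p'.1 j, p'.2 j) := fun j => ee_inj hs hM (h1 j)
  apply Prod.ext
  · funext j; exact congrArg Prod.fst (h2 j)
  · funext j; exact congrArg Prod.snd (h2 j)

include hM in
lemma symp_LL (n : ℕ) (p u w : (Fin n → ℝ) × (Fin n → ℝ)) :
    stdSymplForm n (LL s M n p u) (LL s M n p w) = stdSymplForm n u w := by
  have hdet : ∀ j : Fin n, PX s M (p.1 j, p.2 j) * QY s M (p.1 j, p.2 j)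
      - QX s M (p.1 j, p.2 j) * PY s M (p.1 j, p.2 j) = 1 :=
    fun j => det_ee hs hM _
  simp only [stdSymplForm, LL, dotProduct, ContinuousLinearMap.prod_apply,
    ContinuousLinearMap.pi_apply, ContinuousLinearMap.comp_apply, prj_apply, pd_apply]
  rw [← Finset.sum_sub_distrib, ← Finset.sum_sub_distrib]
  refine Finset.sum_congr rfl (fun j _ => ?_)
  linear_combination (u.1 j * w.2 j - u.2 j * w.1 j) * (hdet j)



/-! ### main construction -/

omit hs hM

set_option maxHeartbeats 1600000 in
lemma main (n : ℕ) (a ε' : ℝ) (ha : 0 < a) (hε'0 : 0 < ε') (hε'a : ε' ≤ a/2) :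
    ∃ f : (Fin n → ℝ) × (Fin n → ℝ) → (Fin n → ℝ) × (Fin n → ℝ),
      Function.Injective f ∧ ContDiff ℝ (⊤ : ℕ∞) f ∧
      (∀ p ∈ capacityBall n (2*Real.pi*(a-ε')),
        (f p).1 ∈ diamond n a ∧ ∀ j, (f p).2 j ∈ Set.Ioo (0:ℝ) (2*Real.pi)) ∧
      (∀ p : (Fin n → ℝ) × (Fin n → ℝ), ∀ u w,
        stdSymplForm n (fderiv ℝ f p u) (fderiv ℝ f p w) = stdSymplForm n u w) := by
  have hA : 0 < a - ε' := by linarith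
  set R := Real.sqrt (2*(a-ε')) with hRdef
  have hR : 0 < R := Real.sqrt_pos.2 (by linarith)
  have hR2 : R^2 = 2*(a-ε') := Real.sq_sqrt (by linarith)
  set B := ε'/(11*(n+1)*R) with hBdef
  have hB : 0 < B := by
    apply div_pos hε'0
    positivity
  set sv := min (R/36) (B^2/R) with hsdef
  have hs : 0 < sv := lt_min (by positivity) (by positivity)
  set Mv := 6*Real.sqrt (R/sv) with hMdef
  have hM : 0 ≤ Mv := by positivity
  set T := Real.sqrt (R*sv) with hTdef
  have hT0 : 0 ≤ T := Real.sqrt_nonneg _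
  have hT2 : T^2 = R*sv := Real.sq_sqrt (by positivity)
  have hsR : sv ≤ R/36 := min_le_left _ _
  have hsB : sv ≤ B^2/R := min_le_right _ _
  have hsM6T : sv*Mv = 6*T := by
    rw [hMdef, hTdef]
    have h1 : Real.sqrt (R/sv) * Real.sqrt (sv^2) = Real.sqrt ((R/sv)*sv^2) :=
      (Real.sqrt_mul (by positivity) _).symm
    have h2 : (R/sv)*sv^2 = R*sv := by field_simp
    have h3 : Real.sqrt (sv^2) = sv := Real.sqrt_sq hs.le
    calc sv * (6*Real.sqrt (R/sv)) = 6*(Real.sqrt (R/sv) * Real.sqrt (sv^2)) := by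
          rw [h3]; ring
      _ = 6*Real.sqrt (R*sv) := by rw [h1, h2]
  have hT1 : T ≤ R/6 := by
    have h1 : R*sv ≤ (R/6)^2 := by nlinarith
    calc T ≤ Real.sqrt ((R/6)^2) := Real.sqrt_le_sqrt h1
      _ = R/6 := Real.sqrt_sq (by positivity)
  have hsT : sv ≤ T := by
    have h1 : sv^2 ≤ R*sv := by nlinarith
    calc sv = Real.sqrt (sv^2) := (Real.sqrt_sq hs.le).symm
      _ ≤ Real.sqrt (R*sv) := Real.sqrt_le_sqrt h1
  have hTB : T ≤ B := by
    have h1 : R*sv ≤ B^2 := by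
      have h2 := mul_le_mul_of_nonneg_left hsB hR.le
      have h3 : R*(B^2/R) = B^2 := by field_simp
      linarith [h3 ▸ h2]
    calc T ≤ Real.sqrt (B^2) := Real.sqrt_le_sqrt h1
      _ = B := Real.sqrt_sq hB.le
  have hsM_R : sv*Mv ≤ R := by rw [hsM6T]; linarith
  have hn0 : (0:ℝ) ≤ (n:ℝ) := Nat.cast_nonneg n
  have hEE : (n:ℝ)*(2*R*(sv*Mv)+(sv*Mv)^2+2*sv^2*Mv+sv^2) ≤ 2*ε' := by
    have hEEeq : 2*R*(sv*Mv)+(sv*Mv)^2+2*sv^2*Mv+sv^2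
        = 12*R*T + 36*T^2 + 12*(sv*T) + sv^2 := by
      linear_combination (2*R + sv*Mv + 6*T + 2*sv) * hsM6T
    have b1 : T^2 ≤ (R/6)*T := by nlinarith [mul_le_mul_of_nonneg_right hT1 hT0]
    have b2 : sv*T ≤ T^2 := by nlinarith [mul_le_mul_of_nonneg_right hsT hT0]
    have b3 : sv^2 ≤ T^2 := by nlinarith [mul_le_mul_of_nonneg_left hsT hs.le]
    have hEEb : 2*R*(sv*Mv)+(sv*Mv)^2+2*sv^2*Mv+sv^2 ≤ 21*(R*T) := by
      rw [hEEeq]; linarith [mul_nonneg hR.le hT0]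
    have h1 : (n:ℝ)*(2*R*(sv*Mv)+(sv*Mv)^2+2*sv^2*Mv+sv^2) ≤ (n:ℝ)*(21*(R*T)) :=
      mul_le_mul_of_nonneg_left hEEb hn0
    have h2 : (n:ℝ)*(21*(R*T)) ≤ (n:ℝ)*(21*(R*B)) := by
      have := mul_le_mul_of_nonneg_left hTB (by positivity : (0:ℝ) ≤ R)
      nlinarith [mul_le_mul_of_nonneg_left this (by positivity : (0:ℝ) ≤ 21*(n:ℝ))]
    have h3 : (n:ℝ)*(21*(R*B)) = 21*(n:ℝ)*ε'/(11*(n+1)) := by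
      rw [hBdef]
      field_simp
    have h4 : 21*(n:ℝ)*ε'/(11*(n+1)) ≤ 2*ε' := by
      rw [div_le_iff₀ (by positivity)]
      nlinarith
    linarith
  have hLfb : ∀ x : ℝ, |x| ≤ R → |Lf sv (gam sv Mv x)| ≤ Mv := by
    intro x hx
    have h1 : |gam sv Mv x| ≤ |x| + sv*Mv := abs_gam_le hs hM x
    have h2 : |gam sv Mv x| ≤ 2*R := by linarith
    have h3 := abs_Lf_le hs (gam sv Mv x) R h2
    have h4 : (0:ℝ) ≤ Real.sqrt (R/sv) := Real.sqrt_nonneg _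
    rw [hMdef]
    linarith
  refine ⟨bigF sv Mv n, bigF_inj hs hM n, contDiff_bigF hs hM n, ?_, ?_⟩
  · rintro p hp
    have hπ := Real.pi_pos
    have hp' : Real.pi * ∑ j, ((p.1 j)^2 + (p.2 j)^2) < Real.pi * (2*(a-ε')) := by
      have h0 : (2:ℝ)*Real.pi*(a-ε') = Real.pi * (2*(a-ε')) := by ring
      have := hp
      simp only [capacityBall, Set.mem_setOf_eq] at this
      linarith [h0 ▸ this]
    have hsum : (∑ j, ((p.1 j)^2 + (p.2 j)^2)) < 2*(a-ε') :=
      (mul_lt_mul_iff_right₀ hπ).1 hp'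
    have hterm_le : ∀ j : Fin n, (p.1 j)^2 + (p.2 j)^2 ≤ ∑ i, ((p.1 i)^2 + (p.2 i)^2) :=
      fun j => Finset.single_le_sum (f := fun i => (p.1 i)^2 + (p.2 i)^2)
        (fun i _ => by positivity) (Finset.mem_univ j)
    have hxj : ∀ j : Fin n, |p.1 j| ≤ R := by
      intro j
      have h1 : (p.1 j)^2 ≤ R^2 := by nlinarith [hterm_le j, sq_nonneg (p.2 j)]
      nlinarith [sq_abs (p.1 j), abs_nonneg (p.1 j)]
    constructor
    · have hterm : ∀ j : Fin n, 4*|Xfun sv Mv (p.1 j, p.2 j)| ≤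
          ((p.1 j)^2+(p.2 j)^2) + (2*R*(sv*Mv)+(sv*Mv)^2+2*sv^2*Mv+sv^2) :=
        fun j => core_bound hs hM R (p.1 j) (p.2 j) hR (hxj j) hsM_R (hLfb _ (hxj j))
      have hsum4 : ∑ j, 4*|Xfun sv Mv (p.1 j, p.2 j)| ≤
          (∑ j, ((p.1 j)^2+(p.2 j)^2)) +
            (n:ℝ)*(2*R*(sv*Mv)+(sv*Mv)^2+2*sv^2*Mv+sv^2) := by
        calc ∑ j, 4*|Xfun sv Mv (p.1 j, p.2 j)|
            ≤ ∑ j : Fin n, (((p.1 j)^2+(p.2 j)^2) +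
              (2*R*(sv*Mv)+(sv*Mv)^2+2*sv^2*Mv+sv^2)) := Finset.sum_le_sum (fun j _ => hterm j)
          _ = (∑ j, ((p.1 j)^2+(p.2 j)^2)) +
              (n:ℝ)*(2*R*(sv*Mv)+(sv*Mv)^2+2*sv^2*Mv+sv^2) := by
            rw [Finset.sum_add_distrib, Finset.sum_const, Finset.card_univ,
              Fintype.card_fin, nsmul_eq_mul]
      have hmulsum : ∑ j, 4*|Xfun sv Mv (p.1 j, p.2 j)|
          = 4 * ∑ j, |Xfun sv Mv (p.1 j, p.2 j)| := by
        rw [Finset.mul_sum]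
      simp only [diamond, Set.mem_setOf_eq]
      have hfx : ∀ j : Fin n, (bigF sv Mv n p).1 j = Xfun sv Mv (p.1 j, p.2 j) :=
        fun j => rfl
      have : (4:ℝ) * ∑ j, |Xfun sv Mv (p.1 j, p.2 j)| < 2*a := by
        rw [← hmulsum]
        linarith
      calc ∑ j, |(bigF sv Mv n p).1 j| = ∑ j, |Xfun sv Mv (p.1 j, p.2 j)| := by
            refine Finset.sum_congr rfl (fun j _ => by rw [hfx j])
        _ < a/2 := by linarith
    · intro j
      exact Yfun_mem (p.1 j, p.2 j)
  · intro p u w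
    rw [(hasFDerivAt_bigF hs hM n p).fderiv]
    exact symp_LL hs hM n p u w

end LMS41

/-- Lemma 4.1 of Latschev–McDuff–Schlenk: for every `ε > 0` the ball of capacity
`2π(a - ε)` embeds symplectically into `◇ⁿ(a) × (0, 2π)ⁿ` with the standard symplectic
form `Σ dxⱼ ∧ dyⱼ`: there is a smooth injective map on the ball, with values in
`◇ⁿ(a) × (0, 2π)ⁿ`, whose derivative preserves the symplectic form. -/
theorem stmt11 (n : ℕ) (a : ℝ) (ha : 0 < a) :
    ∀ ε : ℝ, 0 < ε →
      ∃ f : (Fin n → ℝ) × (Fin n → ℝ) → (Fin n → ℝ) × (Fin n → ℝ),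
        Set.InjOn f (capacityBall n (2 * Real.pi * (a - ε))) ∧
        ContDiffOn ℝ (⊤ : ℕ∞) f (capacityBall n (2 * Real.pi * (a - ε))) ∧
        (∀ p ∈ capacityBall n (2 * Real.pi * (a - ε)),
          (f p).1 ∈ diamond n a ∧ ∀ j, (f p).2 j ∈ Set.Ioo (0 : ℝ) (2 * Real.pi)) ∧
        (∀ p ∈ capacityBall n (2 * Real.pi * (a - ε)),
          ∀ u w : (Fin n → ℝ) × (Fin n → ℝ),
            stdSymplForm n (fderiv ℝ f p u) (fderiv ℝ f p w) = stdSymplForm n u w) := by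
  intro ε hε
  have hε'0 : 0 < min ε (a/2) := lt_min hε (by linarith)
  have hε'a : min ε (a/2) ≤ a/2 := min_le_right _ _
  obtain ⟨f, hinj, hcd, hmem, hsymp⟩ := LMS41.main n a (min ε (a/2)) ha hε'0 hε'a
  have hsub : capacityBall n (2*Real.pi*(a-ε)) ⊆ capacityBall n (2*Real.pi*(a-min ε (a/2))) := by
    intro p hp
    simp only [capacityBall, Set.mem_setOf_eq] at *
    have h1 : a - ε ≤ a - min ε (a/2) := by
      have := min_le_left ε (a/2)
      linarith
    nlinarith [Real.pi_pos]
  exact ⟨f, hinj.injOn, hcd.contDiffOn, fun p hp => hmem p (hsub hp),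
    fun p _ u w => hsymp p u w⟩
end
end

section
/- Suppose the moment polytope Δ of a compact symplectic toric manifold contains the image Ψ(Diamond^n(a)) of the diamond Diamond^n(a) = {x ∈ ℝⁿ : Σ|x_j| < a/2} under some Ψ ∈ SL(n, ℤ) in its interior, and Δ is obtained from a monotone case as t₁·Δ' ⊂ Δ with Δ' reflexive of dimension n ≤ 8 satisfying the Ewald property. Then Diamond^n(2t₁) embeds in Δ up to SL(n,ℤ): there exists Ψ ∈ SL(n,ℤ) with Ψ(Diamond^n(2t₁)) ⊂ Δ. -/
/-! The matrix whose columns are the Ewald basis vectors `bⱼ` is unimodular; negating one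
column if necessary puts it in `SL(n, ℤ)`. Since `±bⱼ ∈ Δ'`, every column pairs with every
facet normal `vₖ` into `[-1, 1]`, so the image of `x ∈ ◇ⁿ(2t₁)` pairs with `vₖ` to at most
`Σ |xⱼ| < t₁ ≤ λₖ`. -/

open Matrix

section

variable {ι : Type*} [Fintype ι] [DecidableEq ι]

theorem Module.Basis.isUnit_det_toMatrix_basisFun {R : Type*} [CommRing R]
    (b : Module.Basis ι R (ι → R)) : IsUnit ((Pi.basisFun R ι).toMatrix b).det := by
  simpa only [Module.Basis.det_apply] using (Pi.basisFun R ι).isUnit_det b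

theorem Matrix.exists_abs_eq_one_det_mul_diagonal_eq_one {M : Matrix ι ι ℤ}
    (hM : IsUnit M.det) : ∃ s : ι → ℤ, (∀ j, |s j| = 1) ∧ (M * diagonal s).det = 1 := by
  cases isEmpty_or_nonempty ι with
  | inl _ => exact ⟨1, fun _ => abs_one, by simp [det_isEmpty]⟩
  | inr hι =>
    obtain ⟨i₀⟩ := hι
    refine ⟨Function.update 1 i₀ M.det, fun j => ?_, ?_⟩
    · rcases eq_or_ne j i₀ with rfl | hj
      · simpa using Int.isUnit_iff_abs_eq.mp hM
      · simp [Function.update_of_ne hj]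
    · rw [det_mul, det_diagonal, Finset.prod_update_of_mem (Finset.mem_univ i₀)]
      simpa using Int.isUnit_mul_self hM

end

section

variable {R : Type*} [CommRing R] [LinearOrder R]

theorem Matrix.dotProduct_le_sum_abs [IsStrictOrderedRing R] {ι : Type*} [Fintype ι]
    {x w : ι → R} (hw : ∀ j, |w j| ≤ 1) : x ⬝ᵥ w ≤ ∑ j, |x j| :=
  Finset.sum_le_sum fun j _ => calc
    x j * w j ≤ |x j * w j| := le_abs_self _
    _ = |x j| * |w j| := abs_mul _ _
    _ ≤ |x j| := mul_le_of_le_one_right (abs_nonneg _) (hw j)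

theorem Matrix.mulVec_dotProduct_le_sum_abs [IsStrictOrderedRing R] {ι κ : Type*} [Fintype ι]
    [Fintype κ] {A : Matrix ι κ R} {u : ι → R} (hA : ∀ j, |Aᵀ j ⬝ᵥ u| ≤ 1) (x : κ → R) :
    A *ᵥ x ⬝ᵥ u ≤ ∑ j, |x j| := by
  rw [dotProduct_comm, dotProduct_mulVec, dotProduct_comm]
  refine dotProduct_le_sum_abs fun j => ?_
  rw [vecMul, dotProduct_comm]
  exact hA j

theorem Matrix.abs_dotProduct_le {ι : Type*} [Fintype ι] {w u : ι → R} {c : R}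
    (hw : w ⬝ᵥ u ≤ c) (hnw : -w ⬝ᵥ u ≤ c) : |w ⬝ᵥ u| ≤ c :=
  abs_le'.mpr ⟨hw, by rwa [neg_dotProduct] at hnw⟩

end

theorem stmt19_general (n d : ℕ) (v : Fin d → Fin n → ℝ) (lam : Fin d → ℝ)
    (t₁ : ℝ) (hlam : ∀ j, t₁ ≤ lam j)
    (Δ : Set (Fin n → ℝ)) (hΔ : Δ = {x | ∀ j, x ⬝ᵥ v j ≤ lam j})
    (Δ' : Set (Fin n → ℝ)) (hΔ' : Δ' = {x | ∀ j, x ⬝ᵥ v j ≤ 1})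
    (b : Module.Basis (Fin n) ℤ (Fin n → ℤ))
    (hEwald : ∀ j, (fun l => ((b j) l : ℝ)) ∈ Δ' ∧ (fun l => (-((b j) l) : ℝ)) ∈ Δ') :
    ∃ A : Matrix (Fin n) (Fin n) ℤ, A.det = 1 ∧
      ∀ x ∈ diamond n (2 * t₁), (A.map fun z => (z : ℝ)).mulVec x ∈ Δ := by
  subst hΔ hΔ'
  set B := (Pi.basisFun ℤ (Fin n)).toMatrix b
  obtain ⟨s, hs, hdet⟩ :=
    exists_abs_eq_one_det_mul_diagonal_eq_one b.isUnit_det_toMatrix_basisFun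
  refine ⟨B * diagonal s, hdet, fun x hx k => ?_⟩
  have hcol : ∀ j, ((B * diagonal s).map fun z => (z : ℝ))ᵀ j =
      (s j : ℝ) • fun l => (b j l : ℝ) := by
    intro j; ext l; simp [B, Module.Basis.toMatrix_apply, mul_comm]
  have hpair : ∀ j, |((B * diagonal s).map fun z => (z : ℝ))ᵀ j ⬝ᵥ v k| ≤ 1 := by
    intro j
    rw [hcol, smul_dotProduct, smul_eq_mul, abs_mul, ← Int.cast_abs, hs, Int.cast_one, one_mul]
    exact abs_dotProduct_le ((hEwald j).1 k) ((hEwald j).2 k)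
  have hx : ∑ j, |x j| < t₁ := by simpa [diamond] using hx
  exact (mulVec_dotProduct_le_sum_abs hpair x).trans (hx.le.trans (hlam k))

/-- If `Δ = {x | ⟨x, vⱼ⟩ ≤ λⱼ}` is the Delzant polytope of a toric manifold, `t₁ > 0`
the first dimension-drop time (so `t₁ ≤ λⱼ` for all `j`, giving `t₁ • Δ' ⊆ Δ` for the
reflexive polytope `Δ' = {x | ⟨x, vⱼ⟩ ≤ 1}`), `n ≤ 8`, and `Δ'` satisfies the Ewald
property (a ℤ-basis `b` of `ℤⁿ` with `±bⱼ ∈ Δ'`), then some `Ψ ∈ SL(n, ℤ)` maps the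
diamond `◇ⁿ(2t₁)` into `Δ`. -/
theorem stmt19 (n d : ℕ) (hn : n ≤ 8) (v : Fin d → Fin n → ℝ) (lam : Fin d → ℝ)
    (t₁ : ℝ) (ht₁ : 0 < t₁) (hlam : ∀ j, t₁ ≤ lam j)
    (Δ : Set (Fin n → ℝ)) (hΔ : Δ = {x | ∀ j, x ⬝ᵥ v j ≤ lam j})
    (Δ' : Set (Fin n → ℝ)) (hΔ' : Δ' = {x | ∀ j, x ⬝ᵥ v j ≤ 1})
    (b : Module.Basis (Fin n) ℤ (Fin n → ℤ))
    (hEwald : ∀ j, (fun l => ((b j) l : ℝ)) ∈ Δ' ∧ (fun l => (-((b j) l) : ℝ)) ∈ Δ') :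
    ∃ A : Matrix (Fin n) (Fin n) ℤ, A.det = 1 ∧
      ∀ x ∈ diamond n (2 * t₁), (A.map fun z => (z : ℝ)).mulVec x ∈ Δ :=
  stmt19_general n d v lam t₁ hlam Δ hΔ Δ' hΔ' b hEwald
end
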